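/- arXiv:2204.09219 — 4 statements merged into one kernel-verified Lean document; each statement's English description precedes it below -/
import Mathlib

section
/- Let (K_1,…,K_n) be a Cantor-type graph-directed attractor in ℝ^d with level-k approximations Q_{i,k}. Let P be a face of [0,1]^d of dimension at most d−1 and let i ∈ {1,…,n}. For every k ≥ 1, if there is a walk of length k in the graph G_P which starts from i, then P ∩ Q_{i,k} ≠ ∅. -/
open Set

/-- The closed unit cube `[0,1]^d` in `ℝ^d`. -/
def unitCube (d : ℕ) : Set (Fin d → ℝ) := {x | ∀ m, x m ∈ Set.Icc (0 : ℝ) 1}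

/-- The contracting similarity `x ↦ N⁻¹(x + t)` on `ℝ^d`. -/
noncomputable def cmap {d : ℕ} (N : ℕ) (t : Fin d → ℕ) (x : Fin d → ℝ) : Fin d → ℝ :=
  fun m => (x m + t m) / N

/-- The face of `[0,1]^d` determined by an index set `s` and prescribed values `a`
(`a m ∈ {0,1}` for `m ∈ s`); its dimension is `d - s.card`. -/
def face {d : ℕ} (s : Finset (Fin d)) (a : Fin d → ℝ) : Set (Fin d → ℝ) :=
  {x | x ∈ unitCube d ∧ ∀ m ∈ s, x m = a m}

/-- A Cantor-type graph-directed system: a finite directed multigraph on `Fin n`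
in which every vertex has an outgoing edge, together with translation vectors
`t e ∈ {0,…,N-1}^d`; distinct parallel edges carry distinct vectors. -/
structure CantorGDS (d N n : ℕ) where
  E : Type
  fintypeE : Fintype E
  src : E → Fin n
  dst : E → Fin n
  t : E → Fin d → ℕ
  t_lt : ∀ e m, t e m < N
  exists_out : ∀ v : Fin n, ∃ e : E, src e = v
  distinct : ∀ e e' : E, src e = src e' → dst e = dst e' → t e = t e' → e = e'

namespace CantorGDS

/-- The map `φ_e(x) = N⁻¹(x + t_e)` associated with an edge. -/
noncomputable def phi {d N n : ℕ} (S : CantorGDS d N n) (e : S.E) : (Fin d → ℝ) → (Fin d → ℝ) :=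
  cmap N (S.t e)

/-- `(K 1, …, K n)` is the Cantor-type graph-directed attractor of `S`:
an `n`-tuple of nonempty compact sets with `K i = ⋃_{j} ⋃_{e ∈ E_{i,j}} φ_e(K j)`. -/
def IsAttractor {d N n : ℕ} (S : CantorGDS d N n) (K : Fin n → Set (Fin d → ℝ)) : Prop :=
  (∀ i, (K i).Nonempty) ∧ (∀ i, IsCompact (K i)) ∧
    (∀ i, K i = ⋃ e : S.E, ⋃ _ : S.src e = i, S.phi e '' K (S.dst e))

/-- The level-`k` approximations: `Q 0 i = [0,1]^d` and
`Q (k+1) i = ⋃_{j} ⋃_{e ∈ E_{i,j}} φ_e(Q k j)`. -/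
def Q {d N n : ℕ} (S : CantorGDS d N n) : ℕ → Fin n → Set (Fin d → ℝ)
  | 0, _ => unitCube d
  | (k+1), i => ⋃ e : S.E, ⋃ _ : S.src e = i, S.phi e '' CantorGDS.Q S k (S.dst e)

/-- A solid edge from `(i,j)` to `(i',j')` in the intersecting graph:
`i ≠ j` and there are `e ∈ E_{i,i'}`, `e' ∈ E_{j,j'}` with `φ_e = φ_{e'}`. -/
def SolidEdge {d N n : ℕ} (S : CantorGDS d N n) (i j i' j' : Fin n) : Prop :=
  i ≠ j ∧ ∃ e e' : S.E, S.src e = i ∧ S.dst e = i' ∧ S.src e' = j ∧ S.dst e' = j' ∧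
    S.t e = S.t e'

/-- `e, e'` witness a dashed edge: the cubes `φ_e([0,1]^d)` and `φ_{e'}([0,1]^d)` share a
nonempty common face of dimension at most `d-1`; equivalently `t_e ≠ t_{e'}` and every
coordinate of `t_e - t_{e'}` lies in `{-1,0,1}`. -/
def DashedWitness {d N n : ℕ} (S : CantorGDS d N n) (e e' : S.E) : Prop :=
  S.t e ≠ S.t e' ∧ ∀ m, ((S.t e m : ℤ) - (S.t e' m : ℤ)).natAbs ≤ 1

/-- A terminated edge from `(i,j)` to `(i',j')` in the intersecting graph: either a solid
edge with `i' = j'`, or a dashed edge witnessed by `e, e'` with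
`φ_e(K i') ∩ φ_{e'}(K j') ≠ ∅`. -/
def TerminatedEdge {d N n : ℕ} (S : CantorGDS d N n) (K : Fin n → Set (Fin d → ℝ))
    (i j i' j' : Fin n) : Prop :=
  i ≠ j ∧ ∃ e e' : S.E, S.src e = i ∧ S.dst e = i' ∧ S.src e' = j ∧ S.dst e' = j' ∧
    ((S.t e = S.t e' ∧ i' = j') ∨
      (DashedWitness S e e' ∧ (S.phi e '' K i' ∩ S.phi e' '' K j').Nonempty))

/-- A solid walk of length `m` in the intersecting graph starting from `(i,j)`. -/
def SolidWalkOfLength {d N n : ℕ} (S : CantorGDS d N n) (m : ℕ) (i j : Fin n) : Prop :=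
  ∃ p q : ℕ → Fin n, p 0 = i ∧ q 0 = j ∧
    ∀ k < m, SolidEdge S (p k) (q k) (p (k + 1)) (q (k + 1))

/-- An infinite solid walk in the intersecting graph starting from `(i,j)`. -/
def InfSolidWalk {d N n : ℕ} (S : CantorGDS d N n) (i j : Fin n) : Prop :=
  ∃ p q : ℕ → Fin n, p 0 = i ∧ q 0 = j ∧
    ∀ k, SolidEdge S (p k) (q k) (p (k + 1)) (q (k + 1))

/-- A terminated finite walk in the intersecting graph starting from `(i,j)`: a walk of
length `m + 1` whose first `m` edges are solid and whose last edge is terminated. -/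
def TerminatedWalk {d N n : ℕ} (S : CantorGDS d N n) (K : Fin n → Set (Fin d → ℝ))
    (i j : Fin n) : Prop :=
  ∃ m : ℕ, ∃ p q : ℕ → Fin n, p 0 = i ∧ q 0 = j ∧
    (∀ k < m, SolidEdge S (p k) (q k) (p (k + 1)) (q (k + 1))) ∧
    TerminatedEdge S K (p m) (q m) (p (m + 1)) (q (m + 1))

/-- The edge relation of the graph `G_P`: there is an edge from `i` to `j` whenever
`P ∩ ⋃_{e ∈ E_{i,j}} φ_e([0,1]^d) ≠ ∅`. -/
def GPEdge {d N n : ℕ} (S : CantorGDS d N n) (P : Set (Fin d → ℝ)) (i j : Fin n) : Prop :=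
  ∃ e : S.E, S.src e = i ∧ S.dst e = j ∧ (P ∩ S.phi e '' unitCube d).Nonempty

/-- There is a walk of length `k` in the graph `G_P` starting from `i`. -/
def GPWalk {d N n : ℕ} (S : CantorGDS d N n) (P : Set (Fin d → ℝ)) (i : Fin n) (k : ℕ) :
    Prop :=
  ∃ p : ℕ → Fin n, p 0 = i ∧ ∀ l < k, GPEdge S P (p l) (p (l + 1))

/-- `l` is a walk in the directed graph of `S` starting from vertex `i`. -/
def WalkFrom {d N n : ℕ} (S : CantorGDS d N n) (i : Fin n) (l : List S.E) : Prop :=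
  (∀ e ∈ l.head?, S.src e = i) ∧ List.Chain' (fun e e' => S.dst e = S.src e') l

/-- The terminal vertex of a walk `l` starting from `i` (equal to `i` if `l` is empty). -/
def ter {d N n : ℕ} (S : CantorGDS d N n) (i : Fin n) (l : List S.E) : Fin n :=
  l.getLast?.elim i S.dst

/-- For a walk `𝐞 = (e_1, …, e_k)`, the composition `φ_𝐞 = φ_{e_1} ∘ ⋯ ∘ φ_{e_k}`. -/
noncomputable def phiWalk {d N n : ℕ} (S : CantorGDS d N n) (l : List S.E) :
    (Fin d → ℝ) → (Fin d → ℝ) :=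
  l.foldr (fun e f => S.phi e ∘ f) id

/-- For an infinite walk `e`, the composition `φ_{e 0} ∘ ⋯ ∘ φ_{e (m-1)}` of its first
`m` maps. -/
noncomputable def compWalk {d N n : ℕ} (S : CantorGDS d N n) (e : ℕ → S.E) :
    ℕ → (Fin d → ℝ) → (Fin d → ℝ)
  | 0 => id
  | (m + 1) => CantorGDS.compWalk S e m ∘ S.phi (e m)

end CantorGDS

/-- The constant `c(n,d) = (d-1)n² + (n²+n)/2 + d - 1`. -/
def cConst (n d : ℕ) : ℕ := (d - 1) * n ^ 2 + (n ^ 2 + n) / 2 + d - 1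

/-!
If the cube `φ_e([0,1]^d)` meets the face `P`, then along each coordinate fixed by `P` the
translation `t_e` is extremal (`0` on a `0`-face, `N - 1` on a `1`-face), so `φ_e` maps `P` into
itself. Following a `G_P`-walk of length `k` backwards from any point of `P` therefore produces
a point of `P ∩ Q_{i,k}`.
-/

lemma cmap_mapsTo_unitCube {d N : ℕ} {t : Fin d → ℕ} (ht : ∀ m, t m < N) :
    MapsTo (cmap N t) (unitCube d) (unitCube d) := by
  intro x hx m
  have hxm := hx m
  have htN : (t m : ℝ) + 1 ≤ N := by exact_mod_cast ht m
  have ht0 : (0 : ℝ) ≤ t m := (t m).cast_nonneg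
  have hN : (0 : ℝ) < N := by linarith
  simp only [cmap, mem_Icc] at hxm ⊢
  exact ⟨div_nonneg (by linarith) hN.le, (div_le_one hN).2 (by linarith)⟩

lemma add_div_eq_self_of_add_div_eq {N t : ℕ} (ht : t < N) {w a : ℝ} (hw : w ∈ Icc 0 1)
    (ha : a = 0 ∨ a = 1) (h : (w + t) / N = a) : (a + t) / N = a := by
  have htN : (t : ℝ) + 1 ≤ N := by exact_mod_cast ht
  have ht0 : (0 : ℝ) ≤ t := t.cast_nonneg
  have hN : (N : ℝ) ≠ 0 := by linarith
  rw [div_eq_iff hN] at h ⊢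
  rcases ha with rfl | rfl <;> linarith [hw.1, hw.2]

lemma face_nonempty {d : ℕ} {s : Finset (Fin d)} {a : Fin d → ℝ}
    (ha : ∀ m ∈ s, a m = 0 ∨ a m = 1) : (face s a).Nonempty := by
  refine ⟨s.piecewise a 0, fun m => ?_, fun m hm => s.piecewise_eq_of_mem a 0 hm⟩
  by_cases hm : m ∈ s
  · rw [s.piecewise_eq_of_mem a 0 hm]
    rcases ha m hm with h | h <;> simp [h]
  · simp [s.piecewise_eq_of_notMem a 0 hm]

lemma cmap_mapsTo_face {d N : ℕ} {t : Fin d → ℕ} (ht : ∀ m, t m < N)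
    {s : Finset (Fin d)} {a : Fin d → ℝ} (ha : ∀ m ∈ s, a m = 0 ∨ a m = 1)
    (hmeet : (face s a ∩ cmap N t '' unitCube d).Nonempty) :
    MapsTo (cmap N t) (face s a) (face s a) := by
  obtain ⟨_, ⟨-, hz⟩, w, hw, rfl⟩ := hmeet
  intro y ⟨hy, hys⟩
  refine ⟨cmap_mapsTo_unitCube ht hy, fun m hm => ?_⟩
  simp only [cmap, hys m hm]
  exact add_div_eq_self_of_add_div_eq (ht m) (hw m) (ha m hm) (hz m hm)

namespace CantorGDS

variable {d N n : ℕ} (S : CantorGDS d N n)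

lemma phi_mem_Q_succ {k : ℕ} (e : S.E) {y : Fin d → ℝ} (hy : y ∈ S.Q k (S.dst e)) :
    S.phi e y ∈ S.Q (k + 1) (S.src e) :=
  mem_iUnion₂.2 ⟨e, rfl, y, hy, rfl⟩

lemma GPWalk.tail {P : Set (Fin d → ℝ)} {i : Fin n} {k : ℕ} (h : S.GPWalk P i (k + 1)) :
    ∃ e : S.E, S.src e = i ∧ (P ∩ S.phi e '' unitCube d).Nonempty ∧
      S.GPWalk P (S.dst e) k := by
  obtain ⟨p, rfl, hp⟩ := h
  obtain ⟨e, hsrc, hdst, hmeet⟩ := hp 0 k.succ_pos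
  exact ⟨e, hsrc, hmeet, fun l => p (l + 1), hdst.symm, fun l hl => hp (l + 1) (by omega)⟩

lemma GPWalk.inter_Q_nonempty {P : Set (Fin d → ℝ)} (hP : (P ∩ unitCube d).Nonempty)
    (hinv : ∀ e, (P ∩ S.phi e '' unitCube d).Nonempty → MapsTo (S.phi e) P P) :
    ∀ {k : ℕ} {i : Fin n}, S.GPWalk P i k → (P ∩ S.Q k i).Nonempty
  | 0, _, _ => hP
  | k + 1, _, h => by
    obtain ⟨e, rfl, hmeet, hwalk⟩ := GPWalk.tail S h
    obtain ⟨y, hyP, hyQ⟩ := GPWalk.inter_Q_nonempty hP hinv hwalk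
    exact ⟨S.phi e y, hinv e hmeet hyP, S.phi_mem_Q_succ e hyQ⟩

end CantorGDS

theorem gpWalk_imp_face_inter_approx_general
    {d N n : ℕ}
    (S : CantorGDS d N n)
    (s : Finset (Fin d)) (a : Fin d → ℝ) (ha : ∀ m ∈ s, a m = 0 ∨ a m = 1)
    (i : Fin n) (k : ℕ)
    (hwalk : CantorGDS.GPWalk S (face s a) i k) :
    (face s a ∩ CantorGDS.Q S k i).Nonempty := by
  have hface : (face s a ∩ unitCube d).Nonempty :=
    (face_nonempty ha).mono fun _ hx => ⟨hx, hx.1⟩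
  exact CantorGDS.GPWalk.inter_Q_nonempty S hface
    (fun e => cmap_mapsTo_face (S.t_lt e) ha) hwalk

/-- **Lemma.** Let `P` be a face of `[0,1]^d` of dimension at most `d-1` and `i` a vertex.
For every `k ≥ 1`, if there is a walk of length `k` in the graph `G_P` starting from `i`,
then `P ∩ Q_{i,k} ≠ ∅`. -/
theorem gpWalk_imp_face_inter_approx
    {d N n : ℕ} (hd : 1 ≤ d) (hN : 2 ≤ N) (hn : 1 ≤ n)
    (S : CantorGDS d N n) (K : Fin n → Set (Fin d → ℝ)) (hK : S.IsAttractor K)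
    (s : Finset (Fin d)) (a : Fin d → ℝ) (ha : ∀ m ∈ s, a m = 0 ∨ a m = 1)
    (hs : s.Nonempty) (i : Fin n) (k : ℕ) (hk : 1 ≤ k)
    (hwalk : CantorGDS.GPWalk S (face s a) i k) :
    (face s a ∩ CantorGDS.Q S k i).Nonempty :=
  gpWalk_imp_face_inter_approx_general S s a ha i k hwalk
end

section
/- Let (K_1,…,K_n) be a Cantor-type graph-directed attractor in ℝ^d and let i, j ∈ {1,…,n} be distinct. If there exists an infinite solid walk in the intersecting graph that starts from (i,j) — that is, infinite sequences (i_k)_{k≥0}, (j_k)_{k≥0} with (i_0,j_0) = (i,j) and, for every k ≥ 0, edges e_k ∈ E_{i_k,i_{k+1}} and e′_k ∈ E_{j_k,j_{k+1}} with φ_{e_k} = φ_{e′_k} — then K_i ∩ K_j ≠ ∅. -/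
open Set

lemma phi_dist_le {d N n : ℕ} (hN : 2 ≤ N) (S : CantorGDS d N n) (e : S.E)
    (x y : Fin d → ℝ) : dist (S.phi e x) (S.phi e y) ≤ (N : ℝ)⁻¹ * dist x y := by
  have hNpos : (0 : ℝ) < N := by positivity
  rcases Nat.eq_zero_or_pos d with hd0 | hd0
  · subst hd0
    simp [Subsingleton.elim (S.phi e x) (S.phi e y), Subsingleton.elim x y]
  · have : Nonempty (Fin d) := ⟨⟨0, hd0⟩⟩
    rw [dist_pi_le_iff (by positivity)]
    intro m
    have h1 : dist (S.phi e x m) (S.phi e y m) = (N : ℝ)⁻¹ * dist (x m) (y m) := by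
      simp only [CantorGDS.phi, cmap, Real.dist_eq]
      rw [div_sub_div_same, add_sub_add_right_eq_sub, abs_div, abs_of_pos hNpos]
      ring
    rw [h1]
    exact mul_le_mul_of_nonneg_left (dist_le_pi_dist x y m) (by positivity)

lemma compWalk_dist_le {d N n : ℕ} (hN : 2 ≤ N) (S : CantorGDS d N n) (e : ℕ → S.E)
    (m : ℕ) (x y : Fin d → ℝ) :
    dist (S.compWalk e m x) (S.compWalk e m y) ≤ ((N : ℝ)⁻¹) ^ m * dist x y := by
  induction m generalizing x y with
  | zero => simp [CantorGDS.compWalk]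
  | succ m ih =>
    calc dist (S.compWalk e (m + 1) x) (S.compWalk e (m + 1) y)
        ≤ ((N : ℝ)⁻¹) ^ m * dist (S.phi (e m) x) (S.phi (e m) y) := ih _ _
      _ ≤ ((N : ℝ)⁻¹) ^ m * ((N : ℝ)⁻¹ * dist x y) := by
          exact mul_le_mul_of_nonneg_left (phi_dist_le hN S _ x y) (by positivity)
      _ = ((N : ℝ)⁻¹) ^ (m + 1) * dist x y := by ring

lemma compWalk_mem {d N n : ℕ} (S : CantorGDS d N n) (K : Fin n → Set (Fin d → ℝ))
    (hK : S.IsAttractor K) (e : ℕ → S.E) (p : ℕ → Fin n)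
    (hsrc : ∀ k, S.src (e k) = p k) (hdst : ∀ k, S.dst (e k) = p (k + 1)) :
    ∀ m, ∀ z ∈ K (p m), S.compWalk e m z ∈ K (p 0) := by
  intro m
  induction m with
  | zero => intro z hz; simpa [CantorGDS.compWalk] using hz
  | succ m ih =>
    intro z hz
    have hmem : S.phi (e m) z ∈ K (p m) := by
      rw [hK.2.2 (p m)]
      exact Set.mem_iUnion.2 ⟨e m, Set.mem_iUnion.2 ⟨hsrc m,
        ⟨z, by rw [hdst m]; exact hz, rfl⟩⟩⟩
    exact ih _ hmem

lemma compWalk_congr {d N n : ℕ} (S : CantorGDS d N n) (e e' : ℕ → S.E)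
    (ht : ∀ k, S.t (e k) = S.t (e' k)) (m : ℕ) :
    S.compWalk e m = S.compWalk e' m := by
  induction m with
  | zero => rfl
  | succ m ih =>
    show S.compWalk e m ∘ S.phi (e m) = S.compWalk e' m ∘ S.phi (e' m)
    rw [ih]
    have : S.phi (e m) = S.phi (e' m) := by
      simp only [CantorGDS.phi, ht m]
    rw [this]

/-- **Proposition.** If there exists an infinite solid walk in the intersecting graph
starting from `(i,j)` (with `i ≠ j`), then `K i ∩ K j ≠ ∅`. -/
theorem infSolidWalk_imp_intersect
    {d N n : ℕ} (hd : 1 ≤ d) (hN : 2 ≤ N) (hn : 1 ≤ n)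
    (S : CantorGDS d N n) (K : Fin n → Set (Fin d → ℝ)) (hK : S.IsAttractor K)
    (i j : Fin n) (hij : i ≠ j) (hwalk : CantorGDS.InfSolidWalk S i j) :
    (K i ∩ K j).Nonempty := by
  obtain ⟨p, q, hp0, hq0, hsolid⟩ := hwalk
  choose e e' hsrc hdst hsrc' hdst' ht using fun k => (hsolid k).2
  -- points in the attractor pieces
  choose z hz using fun m => hK.1 (p m)
  choose w hw using fun m => hK.1 (q m)
  -- the two sequences of points
  set x : ℕ → (Fin d → ℝ) := fun m => S.compWalk e m (z m) with hx
  set y : ℕ → (Fin d → ℝ) := fun m => S.compWalk e' m (w m) with hy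
  have hxK : ∀ m, x m ∈ K i := fun m => hp0 ▸ compWalk_mem S K hK e p hsrc hdst m (z m) (hz m)
  have hyK : ∀ m, y m ∈ K j := fun m => hq0 ▸ compWalk_mem S K hK e' q hsrc' hdst' m (w m) (hw m)
  -- a uniform bound on distances between points in the attractor
  have hTcompact : IsCompact (⋃ v, K v) := isCompact_iUnion fun v => hK.2.1 v
  obtain ⟨C, hC⟩ := Metric.isBounded_iff.1 hTcompact.isBounded
  have hCnn : 0 ≤ C := by
    have := hC (Set.mem_iUnion.2 ⟨p 0, hz 0⟩) (Set.mem_iUnion.2 ⟨p 0, hz 0⟩)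
    simpa using (dist_nonneg.trans this)
  -- dist (x m) (y m) ≤ C * (N⁻¹)^m
  have hdistle : ∀ m, dist (x m) (y m) ≤ C * ((N : ℝ)⁻¹) ^ m := by
    intro m
    have hcongr : S.compWalk e' m = S.compWalk e m :=
      (compWalk_congr S e e' ht m).symm
    have h1 : dist (x m) (y m) ≤ ((N : ℝ)⁻¹) ^ m * dist (z m) (w m) := by
      simp only [hx, hy, hcongr]
      exact compWalk_dist_le hN S e m (z m) (w m)
    have h2 : dist (z m) (w m) ≤ C :=
      hC (Set.mem_iUnion.2 ⟨p m, hz m⟩) (Set.mem_iUnion.2 ⟨q m, hw m⟩)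
    calc dist (x m) (y m) ≤ ((N : ℝ)⁻¹) ^ m * dist (z m) (w m) := h1
      _ ≤ ((N : ℝ)⁻¹) ^ m * C := mul_le_mul_of_nonneg_left h2 (by positivity)
      _ = C * ((N : ℝ)⁻¹) ^ m := mul_comm _ _
  have hNinv : (N : ℝ)⁻¹ < 1 := by
    rw [inv_lt_one_iff₀]
    right
    exact_mod_cast Nat.lt_of_lt_of_le one_lt_two hN
  have htend0 : Filter.Tendsto (fun m => dist (x m) (y m)) Filter.atTop (nhds 0) := by
    have : Filter.Tendsto (fun m => C * ((N : ℝ)⁻¹) ^ m) Filter.atTop (nhds 0) := by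
      simpa using (tendsto_pow_atTop_nhds_zero_of_lt_one (by positivity) hNinv).const_mul C
    exact squeeze_zero (fun m => dist_nonneg) hdistle this
  -- extract a convergent subsequence of x in the compact set K i
  obtain ⟨a, haK, φ, hφ, hconv⟩ := (hK.2.1 i).tendsto_subseq hxK
  -- the corresponding subsequence of y converges to the same limit
  have hconvy : Filter.Tendsto (fun k => y (φ k)) Filter.atTop (nhds a) := by
    rw [tendsto_iff_dist_tendsto_zero]
    have hbound : ∀ k, dist (y (φ k)) a ≤
        dist (x (φ k)) (y (φ k)) + dist (x (φ k)) a := fun k => by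
      calc dist (y (φ k)) a ≤ dist (y (φ k)) (x (φ k)) + dist (x (φ k)) a :=
            dist_triangle _ _ _
        _ = dist (x (φ k)) (y (φ k)) + dist (x (φ k)) a := by rw [dist_comm]
    have h1 : Filter.Tendsto (fun k => dist (x (φ k)) (y (φ k))) Filter.atTop (nhds 0) :=
      htend0.comp (hφ.tendsto_atTop)
    have h2 : Filter.Tendsto (fun k => dist (x (φ k)) a) Filter.atTop (nhds 0) := by
      rw [← tendsto_iff_dist_tendsto_zero]
      exact hconv
    have := h1.add h2
    rw [add_zero] at this
    exact squeeze_zero (fun k => dist_nonneg) hbound this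
  have haKj : a ∈ K j :=
    (hK.2.1 j).isClosed.mem_of_tendsto hconvy (Filter.Eventually.of_forall fun k => hyK (φ k))
  exact ⟨a, haK, haKj⟩
end

section
/- Let (K_1,…,K_n) be a Cantor-type graph-directed attractor in ℝ^d and let i, j ∈ {1,…,n} be distinct. Suppose K_i ∩ K_j ≠ ∅ and there are no terminated finite walks in the intersecting graph starting from (i,j). Then for every m ≥ 1 there exists a solid walk in the intersecting graph which starts from (i,j) and has length m. -/
open Set

/-- The attractor is contained in the unit cube. -/
lemma attractor_subset_cube {d N n : ℕ} (hN : 2 ≤ N) (hn : 1 ≤ n)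
    (S : CantorGDS d N n) (K : Fin n → Set (Fin d → ℝ)) (hK : S.IsAttractor K) :
    ∀ i, K i ⊆ unitCube d := by
  obtain ⟨-, hcomp, heq⟩ := hK
  have hN0 : (0 : ℝ) < N := by positivity
  -- choose radii
  have hrad : ∀ i : Fin n, ∃ c : ℝ, ∀ x ∈ K i, ∀ m, |x m| ≤ c := by
    intro i
    obtain ⟨r, hr⟩ := (hcomp i).isBounded.subset_closedBall 0
    refine ⟨r, fun x hx m => ?_⟩
    have hxr : ‖x‖ ≤ r := by simpa [Metric.mem_closedBall] using hr hx
    exact (norm_le_pi_norm x m).trans hxr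
  choose c hc using hrad
  have hni : Nonempty (Fin n) := ⟨⟨0, hn⟩⟩
  set C : ℝ := ∑ i : Fin n, |c i| with hC
  have hC0 : 0 ≤ C := Finset.sum_nonneg fun i _ => abs_nonneg _
  have hCc : ∀ i : Fin n, c i ≤ C := by
    intro i
    calc c i ≤ |c i| := le_abs_self _
    _ ≤ C := Finset.single_le_sum (fun j _ => abs_nonneg (c j)) (Finset.mem_univ i)
  have key : ∀ k : ℕ, ∀ i, ∀ x ∈ K i, ∀ m, -(C / N ^ k) ≤ x m ∧ x m ≤ 1 + C / N ^ k := by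
    intro k
    induction k with
    | zero =>
      intro i x hx m
      have := (hc i x hx m)
      have h2 := (abs_le.mp (this.trans (hCc i)))
      constructor
      · simpa using h2.1
      · have := h2.2; simp only [pow_zero, div_one]; linarith
    | succ k ih =>
      intro i x hx m
      rw [heq i] at hx
      simp only [Set.mem_iUnion] at hx
      obtain ⟨e, hsrc, y, hy, rfl⟩ := hx
      have hym := ih (S.dst e) y hy m
      have hte : (0 : ℝ) ≤ S.t e m := Nat.cast_nonneg _
      have hte' : (S.t e m : ℝ) ≤ N - 1 := by
        have := S.t_lt e m
        have : (S.t e m : ℝ) + 1 ≤ N := by exact_mod_cast this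
        linarith
      have hphi : S.phi e y m = (y m + S.t e m) / N := rfl
      rw [hphi]
      have hpow : (N : ℝ) ^ (k + 1) = N ^ k * N := by ring
      have hNk : (N : ℝ) ^ k ≠ 0 := by positivity
      have hNne : (N : ℝ) ≠ 0 := ne_of_gt hN0
      constructor
      · rw [le_div_iff₀ hN0, hpow]
        have h : -(C / ((N:ℝ) ^ k * N)) * N = -(C / N ^ k) := by field_simp
        rw [h]
        linarith [hym.1, hte]
      · rw [div_le_iff₀ hN0, hpow]
        have h : (1 + C / ((N:ℝ) ^ k * N)) * N = N + C / N ^ k := by field_simp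
        rw [h]
        linarith [hym.2, hte']
  intro i x hx m
  have hlim : Filter.Tendsto (fun k : ℕ => C / (N : ℝ) ^ k) Filter.atTop (nhds 0) := by
    have h1 : Filter.Tendsto (fun k : ℕ => ((N : ℝ)⁻¹) ^ k) Filter.atTop (nhds 0) := by
      apply tendsto_pow_atTop_nhds_zero_of_lt_one (by positivity)
      rw [inv_lt_one_iff₀]
      right
      exact_mod_cast lt_of_lt_of_le one_lt_two hN
    have := h1.const_mul C
    simpa [div_eq_mul_inv, inv_pow] using this
  constructor
  · have h1 : Filter.Tendsto (fun k : ℕ => -(C / (N : ℝ) ^ k)) Filter.atTop (nhds 0) := by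
      simpa using hlim.neg
    exact le_of_tendsto h1 (Filter.Eventually.of_forall fun k => (key k i x hx m).1)
  · have h2 : Filter.Tendsto (fun k : ℕ => 1 + C / (N : ℝ) ^ k) Filter.atTop (nhds 1) := by
      simpa using (tendsto_const_nhds (x := (1:ℝ))).add hlim
    exact ge_of_tendsto h2 (Filter.Eventually.of_forall fun k => (key k i x hx m).2)

/-- One step: from an intersecting pair, either extend by a solid edge to another
intersecting pair, or find a terminated edge. -/
lemma step_lemma {d N n : ℕ} (hN : 2 ≤ N)
    (S : CantorGDS d N n) (K : Fin n → Set (Fin d → ℝ)) (hK : S.IsAttractor K)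
    (hcube : ∀ i, K i ⊆ unitCube d)
    (a b : Fin n) (hab : a ≠ b) (hne : (K a ∩ K b).Nonempty) :
    (∃ a' b', S.SolidEdge a b a' b' ∧ a' ≠ b' ∧ (K a' ∩ K b').Nonempty) ∨
      (∃ a' b', S.TerminatedEdge K a b a' b') := by
  obtain ⟨x, hxa, hxb⟩ := hne
  obtain ⟨-, -, heq⟩ := hK
  have hN0 : (0 : ℝ) < N := by positivity
  rw [heq a] at hxa
  rw [heq b] at hxb
  simp only [Set.mem_iUnion] at hxa hxb
  obtain ⟨e, hsrc, y, hy, hphiy⟩ := hxa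
  obtain ⟨e', hsrc', z, hz, hphiz⟩ := hxb
  have hcoord : ∀ m, (y m + S.t e m) / N = (z m + S.t e' m) / N := by
    intro m
    have : S.phi e y m = S.phi e' z m := by rw [hphiy, hphiz]
    exact this
  have hcoord' : ∀ m, y m + (S.t e m : ℝ) = z m + S.t e' m := by
    intro m
    have := hcoord m
    field_simp at this
    exact this
  by_cases ht : S.t e = S.t e'
  · -- solid edge
    have hyz : y = z := by
      funext m
      have := hcoord' m
      rw [ht] at this
      linarith
    by_cases hd' : S.dst e = S.dst e'
    · right
      exact ⟨S.dst e, S.dst e', hab, e, e', hsrc, rfl, hsrc', rfl, Or.inl ⟨ht, hd'⟩⟩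
    · left
      refine ⟨S.dst e, S.dst e', ⟨hab, e, e', hsrc, rfl, hsrc', rfl, ht⟩, hd', ⟨y, hy, ?_⟩⟩
      rw [hyz]; exact hz
  · -- dashed edge, terminated
    right
    refine ⟨S.dst e, S.dst e', hab, e, e', hsrc, rfl, hsrc', rfl, Or.inr ⟨⟨ht, ?_⟩, ?_⟩⟩
    · intro m
      have hy01 := hcube _ hy m
      have hz01 := hcube _ hz m
      have h := hcoord' m
      have : |(S.t e m : ℝ) - S.t e' m| ≤ 1 := by
        rw [abs_le]
        constructor <;> [skip; skip] <;>
          · simp only [Set.mem_Icc] at hy01 hz01; linarith [hy01.1, hy01.2, hz01.1, hz01.2]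
      have h2 : |((S.t e m : ℤ) - S.t e' m : ℤ)| ≤ 1 := by
        have : |(((S.t e m : ℤ) - S.t e' m : ℤ) : ℝ)| ≤ 1 := by push_cast; exact this
        exact_mod_cast this
      have h3 : ((((S.t e m : ℤ) - S.t e' m).natAbs : ℤ)) ≤ 1 := by
        rwa [Int.abs_eq_natAbs] at h2
      exact_mod_cast h3
    · exact ⟨x, ⟨y, hy, hphiy⟩, ⟨z, hz, hphiz⟩⟩

/-- **Lemma.** Suppose `i ≠ j`, `K i ∩ K j ≠ ∅`, and there are no terminated finite walks
in the intersecting graph starting from `(i,j)`. Then for every `m ≥ 1` there is a solid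
walk starting from `(i,j)` of length `m`. -/
theorem solid_walks_of_all_lengths
    {d N n : ℕ} (hd : 1 ≤ d) (hN : 2 ≤ N) (hn : 1 ≤ n)
    (S : CantorGDS d N n) (K : Fin n → Set (Fin d → ℝ)) (hK : S.IsAttractor K)
    (i j : Fin n) (hij : i ≠ j) (hne : (K i ∩ K j).Nonempty)
    (hnoterm : ¬ CantorGDS.TerminatedWalk S K i j) :
    ∀ m : ℕ, 1 ≤ m → CantorGDS.SolidWalkOfLength S m i j := by
  have hcube := attractor_subset_cube hN hn S K hK
  have main : ∀ m : ℕ, ∃ p q : ℕ → Fin n, p 0 = i ∧ q 0 = j ∧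
      (∀ k < m, S.SolidEdge (p k) (q k) (p (k + 1)) (q (k + 1))) ∧
      p m ≠ q m ∧ (K (p m) ∩ K (q m)).Nonempty := by
    intro m
    induction m with
    | zero =>
      exact ⟨fun _ => i, fun _ => j, rfl, rfl,
        fun k hk => absurd hk (Nat.not_lt_zero k), hij, hne⟩
    | succ m ih =>
      obtain ⟨p, q, hp0, hq0, hsolid, hpq, hint⟩ := ih
      rcases step_lemma hN S K hK hcube _ _ hpq hint with
        ⟨a', b', hse, hab', hint'⟩ | ⟨a', b', hte⟩
      · refine ⟨fun k => if k ≤ m then p k else a', fun k => if k ≤ m then q k else b',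
          by simp [hp0], by simp [hq0], ?_, ?_, ?_⟩
        · intro k hk
          rcases Nat.lt_or_ge k m with hkm | hkm
          · simpa [Nat.le_of_lt hkm, Nat.succ_le_of_lt hkm] using hsolid k hkm
          · have hk' : k = m := by omega
            subst hk'
            simpa [Nat.lt_irrefl] using hse
        · simpa [Nat.lt_irrefl] using hab'
        · simpa [Nat.lt_irrefl] using hint'
      · exfalso
        apply hnoterm
        refine ⟨m, fun k => if k ≤ m then p k else a', fun k => if k ≤ m then q k else b',
          by simp [hp0], by simp [hq0], ?_, ?_⟩
        · intro k hk
          simpa [Nat.le_of_lt hk, Nat.succ_le_of_lt hk] using hsolid k hk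
        · simpa [Nat.lt_irrefl] using hte
  intro m _
  obtain ⟨p, q, hp0, hq0, hsolid, -, -⟩ := main m
  exact ⟨p, q, hp0, hq0, hsolid⟩
end

section
/- Let (K_1,…,K_n) be a Cantor-type graph-directed attractor in ℝ^d and let (i_0,j_0) → (i_1,j_1) → ⋯ → (i_m,j_m) be a solid walk of length m in the intersecting graph. Then: (1) if m ≥ (n²−n)/2, then K_{i_0} ∩ K_{j_0} ≠ ∅; (2) if m ≥ (n²−n)/2 + 1, then there is an infinite solid walk in the intersecting graph which starts from (i_0,j_0). -/
open Set

section Aux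

variable {d N n : ℕ} (S : CantorGDS d N n)

lemma aux_phi_eq {e e' : S.E} (h : S.t e = S.t e') : S.phi e = S.phi e' := by
  unfold CantorGDS.phi; rw [h]

lemma aux_phi_continuous (e : S.E) : Continuous (S.phi e) := by
  unfold CantorGDS.phi cmap
  exact continuous_pi fun m => ((continuous_apply m).add continuous_const).div_const _

lemma aux_phi_dist (hN : 2 ≤ N) (e : S.E) (x y : Fin d → ℝ) :
    dist (S.phi e x) (S.phi e y) ≤ dist x y / N := by
  have hN0 : (0:ℝ) < N := by positivity
  rw [dist_pi_le_iff (by positivity)]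
  intro m
  show dist ((x m + S.t e m) / N) ((y m + S.t e m) / N) ≤ dist x y / N
  rw [Real.dist_eq]
  have h1 : (x m + (S.t e m : ℝ)) / N - (y m + S.t e m) / N = (x m - y m) / N := by ring
  rw [h1, abs_div, abs_of_pos hN0]
  gcongr
  exact (Real.dist_eq (x m) (y m)) ▸ dist_le_pi_dist x y m

lemma aux_compWalk_continuous (e : ℕ → S.E) : ∀ k, Continuous (CantorGDS.compWalk S e k)
  | 0 => continuous_id
  | (k+1) => (aux_compWalk_continuous e k).comp (aux_phi_continuous S (e k))

lemma aux_compWalk_dist (hN : 2 ≤ N) (e : ℕ → S.E) :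
    ∀ k (x y : Fin d → ℝ),
      dist (CantorGDS.compWalk S e k x) (CantorGDS.compWalk S e k y) ≤ dist x y / N ^ k := by
  intro k
  induction k with
  | zero => intro x y; simp [CantorGDS.compWalk]
  | succ k ih =>
    intro x y
    have hN0 : (0:ℝ) < N := by positivity
    calc dist (CantorGDS.compWalk S e (k+1) x) (CantorGDS.compWalk S e (k+1) y)
        = dist (CantorGDS.compWalk S e k (S.phi (e k) x))
            (CantorGDS.compWalk S e k (S.phi (e k) y)) := rfl
      _ ≤ dist (S.phi (e k) x) (S.phi (e k) y) / N ^ k := ih _ _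
      _ ≤ (dist x y / N) / N ^ k := by
          gcongr
          exact aux_phi_dist S hN (e k) x y
      _ = dist x y / N ^ (k+1) := by rw [div_div, ← pow_succ']

lemma aux_compWalk_mem (K : Fin n → Set (Fin d → ℝ))
    (heq : ∀ i, K i = ⋃ e : S.E, ⋃ _ : S.src e = i, S.phi e '' K (S.dst e))
    (f : ℕ → S.E) (r : ℕ → Fin n)
    (hf : ∀ k, S.src (f k) = r k) (hf' : ∀ k, S.dst (f k) = r (k+1)) :
    ∀ k x, x ∈ K (r k) → CantorGDS.compWalk S f k x ∈ K (r 0) := by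
  intro k
  induction k with
  | zero => intro x hx; exact hx
  | succ k ih =>
    intro x hx
    have hx' : S.phi (f k) x ∈ K (r k) := by
      rw [heq (r k)]
      exact Set.mem_iUnion.2 ⟨f k, Set.mem_iUnion.2 ⟨hf k, ⟨x, by rw [hf' k]; exact hx, rfl⟩⟩⟩
    exact ih _ hx'

lemma aux_compWalk_congr (e e' : ℕ → S.E) (h : ∀ k, S.t (e k) = S.t (e' k)) :
    ∀ k, CantorGDS.compWalk S e k = CantorGDS.compWalk S e' k := by
  intro k
  induction k with
  | zero => rfl
  | succ k ih =>
    show CantorGDS.compWalk S e k ∘ S.phi (e k) = CantorGDS.compWalk S e' k ∘ S.phi (e' k)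
    rw [ih, aux_phi_eq S (h k)]

lemma aux_solidEdge_symm {i j i' j' : Fin n} (h : S.SolidEdge i j i' j') :
    S.SolidEdge j i j' i' := by
  obtain ⟨hne, e, e', h1, h2, h3, h4, h5⟩ := h
  exact ⟨hne.symm, e', e, h3, h4, h1, h2, h5.symm⟩

/-- A finite solid walk of length `L` from `(i,j)` to `(i',j')`. -/
def FW (L : ℕ) (i j i' j' : Fin n) : Prop :=
  ∃ p q : ℕ → Fin n, p 0 = i ∧ q 0 = j ∧ p L = i' ∧ q L = j' ∧
    ∀ k < L, S.SolidEdge (p k) (q k) (p (k+1)) (q (k+1))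

lemma aux_FW_symm {L : ℕ} {i j i' j' : Fin n} (h : FW S L i j i' j') :
    FW S L j i j' i' := by
  obtain ⟨p, q, h1, h2, h3, h4, h5⟩ := h
  exact ⟨q, p, h2, h1, h4, h3, fun k hk => aux_solidEdge_symm S (h5 k hk)⟩

lemma aux_FW_concat {L1 L2 : ℕ} {i j i' j' i'' j'' : Fin n}
    (h1 : FW S L1 i j i' j') (h2 : FW S L2 i' j' i'' j'') :
    FW S (L1 + L2) i j i'' j'' := by
  obtain ⟨p, q, hp0, hq0, hpL, hqL, hw⟩ := h1
  obtain ⟨p', q', hp0', hq0', hpL', hqL', hw'⟩ := h2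
  refine ⟨fun k => if k < L1 then p k else p' (k - L1),
          fun k => if k < L1 then q k else q' (k - L1), ?_, ?_, ?_, ?_, ?_⟩
  · by_cases h0 : 0 < L1
    · simp [h0, hp0]
    · have hL0 : L1 = 0 := by omega
      have : i' = i := by rw [← hpL, hL0, hp0]
      simp [h0, hL0, hp0', this]
  · by_cases h0 : 0 < L1
    · simp [h0, hq0]
    · have hL0 : L1 = 0 := by omega
      have : j' = j := by rw [← hqL, hL0, hq0]
      simp [h0, hL0, hq0', this]
  · have h0 : ¬ L1 + L2 < L1 := by omega
    simp only [if_neg h0, Nat.add_sub_cancel_left, hpL']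
  · have h0 : ¬ L1 + L2 < L1 := by omega
    simp only [if_neg h0, Nat.add_sub_cancel_left, hqL']
  · intro k hk
    by_cases h1 : k + 1 < L1
    · have h0 : k < L1 := by omega
      simpa only [if_pos h0, if_pos h1] using hw k h0
    · by_cases h0 : k < L1
      · have hk1 : k + 1 - L1 = 0 := by omega
        have e1 : p (k+1) = i' := by rw [show k + 1 = L1 from by omega, hpL]
        have e2 : q (k+1) = j' := by rw [show k + 1 = L1 from by omega, hqL]
        have := hw k h0
        rw [e1, e2] at this
        simpa only [if_pos h0, if_neg h1, hk1, hp0', hq0'] using this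
      · have h2 : ¬ k + 1 < L1 := by omega
        have e : k + 1 - L1 = (k - L1) + 1 := by omega
        simpa only [if_neg h0, if_neg h2, e] using hw' (k - L1) (by omega)

lemma aux_cycle_inf {L : ℕ} {i j : Fin n} (hL : 1 ≤ L) (h : FW S L i j i j) :
    S.InfSolidWalk i j := by
  obtain ⟨p, q, hp0, hq0, hpL, hqL, hw⟩ := h
  refine ⟨fun k => p (k % L), fun k => q (k % L), by simp [hp0], by simp [hq0], ?_⟩
  intro k
  show S.SolidEdge (p (k % L)) (q (k % L)) (p ((k+1) % L)) (q ((k+1) % L))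
  have hrL : k % L < L := Nat.mod_lt _ (by omega)
  have hmod : (k+1) % L = (k % L + 1) % L := by
    conv_lhs => rw [← Nat.div_add_mod k L, Nat.add_assoc, Nat.mul_add_mod]
  by_cases hcase : k % L + 1 < L
  · have hmm : (k+1) % L = k % L + 1 := by rw [hmod, Nat.mod_eq_of_lt hcase]
    rw [hmm]; exact hw _ hrL
  · have hrL1 : k % L + 1 = L := by omega
    have hmm : (k+1) % L = 0 := by rw [hmod, hrL1, Nat.mod_self]
    rw [hmm]
    have := hw _ hrL
    rwa [hrL1, hpL, ← hp0, hqL, ← hq0] at this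

lemma aux_prefix_inf {L : ℕ} {i j i' j' : Fin n} (h : FW S L i j i' j')
    (hinf : S.InfSolidWalk i' j') : S.InfSolidWalk i j := by
  obtain ⟨p, q, hp0, hq0, hpL, hqL, hw⟩ := h
  obtain ⟨P, Q, hP0, hQ0, hW⟩ := hinf
  refine ⟨fun k => if k < L then p k else P (k - L),
          fun k => if k < L then q k else Q (k - L), ?_, ?_, ?_⟩
  · by_cases h0 : 0 < L
    · simp [h0, hp0]
    · have hL0 : L = 0 := by omega
      have : i' = i := by rw [← hpL, hL0, hp0]
      simp [h0, hL0, hP0, this]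
  · by_cases h0 : 0 < L
    · simp [h0, hq0]
    · have hL0 : L = 0 := by omega
      have : j' = j := by rw [← hqL, hL0, hq0]
      simp [h0, hL0, hQ0, this]
  · intro k
    by_cases h1 : k + 1 < L
    · have h0 : k < L := by omega
      simpa only [if_pos h0, if_pos h1] using hw k h0
    · by_cases h0 : k < L
      · have hk1 : k + 1 - L = 0 := by omega
        have e1 : p (k+1) = i' := by rw [show k + 1 = L from by omega, hpL]
        have e2 : q (k+1) = j' := by rw [show k + 1 = L from by omega, hqL]
        have := hw k h0
        rw [e1, e2] at this
        simpa only [if_pos h0, if_neg h1, hk1, hP0, hQ0] using this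
      · have h2 : ¬ k + 1 < L := by omega
        have e : k + 1 - L = (k - L) + 1 := by omega
        simpa only [if_neg h0, if_neg h2, e] using hW (k - L)

lemma aux_back_step (K : Fin n → Set (Fin d → ℝ))
    (heq : ∀ i, K i = ⋃ e : S.E, ⋃ _ : S.src e = i, S.phi e '' K (S.dst e))
    {i j i' j' : Fin n} (hE : S.SolidEdge i j i' j')
    (h : (K i' ∩ K j').Nonempty) : (K i ∩ K j).Nonempty := by
  obtain ⟨hne, e, e', h1, h2, h3, h4, h5⟩ := hE
  obtain ⟨x, hx1, hx2⟩ := h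
  refine ⟨S.phi e x, ?_, ?_⟩
  · rw [heq i]
    exact Set.mem_iUnion.2 ⟨e, Set.mem_iUnion.2 ⟨h1, ⟨x, by rw [h2]; exact hx1, rfl⟩⟩⟩
  · rw [heq j, aux_phi_eq S h5]
    exact Set.mem_iUnion.2 ⟨e', Set.mem_iUnion.2 ⟨h3, ⟨x, by rw [h4]; exact hx2, rfl⟩⟩⟩

lemma aux_back_prop (K : Fin n → Set (Fin d → ℝ))
    (heq : ∀ i, K i = ⋃ e : S.E, ⋃ _ : S.src e = i, S.phi e '' K (S.dst e))
    (p q : ℕ → Fin n) :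
    ∀ k, (∀ l < k, S.SolidEdge (p l) (q l) (p (l+1)) (q (l+1))) →
      (K (p k) ∩ K (q k)).Nonempty → (K (p 0) ∩ K (q 0)).Nonempty := by
  intro k
  induction k with
  | zero => intro _ h; exact h
  | succ k ih =>
    intro hw h
    exact ih (fun l hl => hw l (by omega)) (aux_back_step S K heq (hw k (by omega)) h)

lemma aux_inf_walk_inter (hN : 2 ≤ N) (K : Fin n → Set (Fin d → ℝ))
    (hK : S.IsAttractor K) {i j : Fin n} (h : S.InfSolidWalk i j) :
    (K i ∩ K j).Nonempty := by
  obtain ⟨hne, hcomp, heq⟩ := hK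
  obtain ⟨p, q, hp0, hq0, hw⟩ := h
  choose e e' he1 he2 he3 he4 he5 using fun k => (hw k).2
  -- the nested compact sets
  set A : ℕ → Set (Fin d → ℝ) := fun k => CantorGDS.compWalk S e k '' K (p k) with hA
  have hnested : ∀ k, A (k+1) ⊆ A k := by
    intro k z hz
    obtain ⟨x, hx, rfl⟩ := hz
    refine ⟨S.phi (e k) x, ?_, rfl⟩
    rw [heq (p k)]
    exact Set.mem_iUnion.2 ⟨e k, Set.mem_iUnion.2 ⟨he1 k, ⟨x, by rw [he2 k]; exact hx, rfl⟩⟩⟩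
  have hAne : ∀ k, (A k).Nonempty := fun k => (hne (p k)).image _
  have hAcomp : ∀ k, IsCompact (A k) :=
    fun k => (hcomp (p k)).image (aux_compWalk_continuous S e k)
  obtain ⟨z, hz⟩ := IsCompact.nonempty_iInter_of_sequence_nonempty_isCompact_isClosed A
    hnested hAne (hAcomp 0) (fun k => (hAcomp k).isClosed)
  have hzA : ∀ k, z ∈ A k := fun k => Set.mem_iInter.1 hz k
  -- bound on the diameter of the union of the pieces
  have hCcomp : IsCompact (⋃ i, K i) := isCompact_iUnion fun i => hcomp i
  obtain ⟨M, hM⟩ := Metric.isBounded_iff.1 hCcomp.isBounded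
  have hN0 : (0:ℝ) < N := by positivity
  have hN1 : (1:ℝ) < N := by exact_mod_cast hN.trans_lt' one_lt_two
  refine ⟨z, ?_, ?_⟩
  · have := hzA 0
    simp only [hA, CantorGDS.compWalk, Set.image_id] at this
    rwa [hp0] at this
  · -- z is a limit point of K j
    have hKjclosed : IsClosed (K j) := (hcomp j).isClosed
    rw [← hKjclosed.closure_eq]
    rw [Metric.mem_closure_iff]
    intro ε hε
    -- choose k with M / N^k < ε
    obtain ⟨k, hk⟩ := pow_unbounded_of_one_lt (M / ε) hN1
    have hkey : M / (N:ℝ) ^ k < ε := by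
      rw [div_lt_iff₀ (by positivity)]
      rw [div_lt_iff₀ hε] at hk
      calc M < (N:ℝ) ^ k * ε := hk
        _ = ε * (N:ℝ) ^ k := by ring
    obtain ⟨x, hx, hxz⟩ := hzA k
    obtain ⟨y, hy⟩ := hne (q k)
    refine ⟨CantorGDS.compWalk S e k y, ?_, ?_⟩
    · rw [aux_compWalk_congr S e e' he5 k]
      have := aux_compWalk_mem S K heq e' q he3 he4 k y hy
      rwa [hq0] at this
    · calc dist z (CantorGDS.compWalk S e k y)
          = dist (CantorGDS.compWalk S e k x) (CantorGDS.compWalk S e k y) := by rw [hxz]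
        _ ≤ dist x y / N ^ k := aux_compWalk_dist S hN e k x y
        _ ≤ M / N ^ k := by
            apply div_le_div_of_nonneg_right ?_ (by positivity) |>.trans_eq rfl
            exact hM (Set.mem_iUnion.2 ⟨p k, hx⟩) (Set.mem_iUnion.2 ⟨q k, hy⟩)
        _ < ε := hkey

lemma aux_pigeon (hn : 1 ≤ n) (p q : ℕ → Fin n)
    (hdiag : ∀ k ≤ (n^2 - n)/2, p k ≠ q k) :
    ∃ a b, a < b ∧ b ≤ (n^2 - n)/2 ∧
      ((p b = p a ∧ q b = q a) ∨ (p b = q a ∧ q b = p a)) := by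
  set T := (n^2 - n)/2 with hT
  have hTcard : (Finset.powersetCard 2 (Finset.univ : Finset (Fin n))).card = T := by
    have hnn : n * (n - 1) = n ^ 2 - n := by
      rw [pow_two, ← Nat.pred_eq_sub_one, Nat.mul_pred]
    rw [Finset.card_powersetCard, Finset.card_univ, Fintype.card_fin, Nat.choose_two_right,
      hnn]
  have hmaps : ∀ k ∈ Finset.range (T+1),
      ({p k, q k} : Finset (Fin n)) ∈ Finset.powersetCard 2 (Finset.univ : Finset (Fin n)) := by
    intro k hk
    rw [Finset.mem_powersetCard]
    have hk' : k ≤ T := by have := Finset.mem_range.1 hk; omega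
    exact ⟨Finset.subset_univ _, Finset.card_pair (hdiag k hk')⟩
  obtain ⟨x, hx, y, hy, hxy, hpair⟩ :=
    Finset.exists_ne_map_eq_of_card_lt_of_maps_to
      (by rw [hTcard, Finset.card_range]; omega) hmaps
  rw [Finset.mem_range] at hx hy
  -- wlog a < b
  obtain ⟨a, b, hab, hb, hpair⟩ :
      ∃ a b, a < b ∧ b < T + 1 ∧ ({p a, q a} : Finset (Fin n)) = {p b, q b} := by
    rcases lt_or_gt_of_ne hxy with hlt | hgt
    · exact ⟨x, y, hlt, hy, hpair⟩
    · exact ⟨y, x, hgt, hx, hpair.symm⟩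
  have hpb : p b ∈ ({p a, q a} : Finset (Fin n)) := by
    rw [hpair]; exact Finset.mem_insert_self _ _
  have hqb : q b ∈ ({p a, q a} : Finset (Fin n)) := by
    rw [hpair]; exact Finset.mem_insert_of_mem (Finset.mem_singleton_self _)
  have hbne : p b ≠ q b := hdiag b (by omega)
  have hane : p a ≠ q a := hdiag a (by omega)
  simp only [Finset.mem_insert, Finset.mem_singleton] at hpb hqb
  refine ⟨a, b, hab, by omega, ?_⟩
  rcases hpb with h1 | h1 <;> rcases hqb with h2 | h2
  · exact absurd (h1.trans h2.symm) hbne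
  · exact Or.inl ⟨h1, h2⟩
  · exact Or.inr ⟨h1, h2⟩
  · exact absurd (h1.trans h2.symm) hbne

lemma aux_exists_inf (hn : 1 ≤ n) (p q : ℕ → Fin n) (m : ℕ)
    (hw : ∀ k < m, S.SolidEdge (p k) (q k) (p (k+1)) (q (k+1)))
    (hm : (n^2 - n)/2 ≤ m)
    (hdiag : ∀ k ≤ (n^2 - n)/2, p k ≠ q k) :
    S.InfSolidWalk (p 0) (q 0) := by
  obtain ⟨a, b, hab, hb, hcase⟩ := aux_pigeon hn p q hdiag
  have hFW1 : FW S a (p 0) (q 0) (p a) (q a) :=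
    ⟨p, q, rfl, rfl, rfl, rfl, fun k hk => hw k (by omega)⟩
  have hFW2 : FW S (b - a) (p a) (q a) (p b) (q b) := by
    refine ⟨fun k => p (a + k), fun k => q (a + k), by simp, by simp, ?_, ?_, ?_⟩
    · show p (a + (b - a)) = p b
      rw [show a + (b - a) = b from by omega]
    · show q (a + (b - a)) = q b
      rw [show a + (b - a) = b from by omega]
    · intro k hk
      have h := hw (a + k) (by omega)
      have e1 : a + k + 1 = a + (k + 1) := by omega
      rwa [e1] at h
  rcases hcase with ⟨h1, h2⟩ | ⟨h1, h2⟩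
  · rw [h1, h2] at hFW2
    exact aux_prefix_inf S hFW1 (aux_cycle_inf S (by omega) hFW2)
  · rw [h1, h2] at hFW2
    have hFW3 : FW S (b - a) (q a) (p a) (p a) (q a) := aux_FW_symm S hFW2
    have hFW4 : FW S ((b - a) + (b - a)) (p a) (q a) (p a) (q a) :=
      aux_FW_concat S hFW2 hFW3
    exact aux_prefix_inf S hFW1 (aux_cycle_inf S (by omega) hFW4)

end Aux

/-- **Lemma.** Let `(i₀,j₀) → ⋯ → (i_m,j_m)` be a solid walk of length `m` in the
intersecting graph. (1) If `m ≥ (n²-n)/2` then `K i₀ ∩ K j₀ ≠ ∅`; (2) if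
`m ≥ (n²-n)/2 + 1` then there is an infinite solid walk starting from `(i₀,j₀)`. -/
theorem long_solid_walk
    {d N n : ℕ} (hd : 1 ≤ d) (hN : 2 ≤ N) (hn : 1 ≤ n)
    (S : CantorGDS d N n) (K : Fin n → Set (Fin d → ℝ)) (hK : S.IsAttractor K)
    (m : ℕ) (i₀ j₀ : Fin n) (hwalk : CantorGDS.SolidWalkOfLength S m i₀ j₀) :
    ((n ^ 2 - n) / 2 ≤ m → (K i₀ ∩ K j₀).Nonempty) ∧
    ((n ^ 2 - n) / 2 + 1 ≤ m → CantorGDS.InfSolidWalk S i₀ j₀) := by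
  obtain ⟨p, q, hp0, hq0, hw⟩ := hwalk
  have heq := hK.2.2
  constructor
  · intro hm
    by_cases hdiag : ∃ k ≤ m, p k = q k
    · obtain ⟨k, hk, hkeq⟩ := hdiag
      have hne : (K (p k) ∩ K (q k)).Nonempty := by
        rw [hkeq, Set.inter_self]; exact hK.1 (q k)
      have := aux_back_prop S K heq p q k (fun l hl => hw l (by omega)) hne
      rwa [hp0, hq0] at this
    · push_neg at hdiag
      have hinf := aux_exists_inf S hn p q m hw hm
        (fun k hk => hdiag k (by omega))
      rw [hp0, hq0] at hinf
      exact aux_inf_walk_inter S hN K hK hinf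
  · intro hm
    have hdiag : ∀ k ≤ (n^2 - n)/2, p k ≠ q k := fun k hk => (hw k (by omega)).1
    have hinf := aux_exists_inf S hn p q m hw (by omega) hdiag
    rwa [hp0, hq0] at hinf
end
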